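/- Let I = ⟨Sign, SEN, (C_Σ)⟩ and I' = ⟨Sign', SEN', (C'_{Σ'})⟩ be π-institutions, F : Sign → Sign' a functor, and for each object Σ of Sign a map α_Σ : SEN(Σ) → P(SEN'(F(Σ))) natural in Σ (i.e. α_{Σ₂}(SEN(f)(φ)) = SEN'(F(f))(α_{Σ₁}(φ)) for every f : Σ₁ → Σ₂ and φ ∈ SEN(Σ₁), images taken elementwise). Suppose ⟨F, α⟩ interprets I in I', i.e. for all Σ, Φ ⊆ SEN(Σ) and φ ∈ SEN(Σ): φ ∈ C_Σ(Φ) if and only if α_Σ(φ) ⊆ C'_{F(Σ)}(α_Σ(Φ)). Let σ : Σ → Σ' be a morphism of Sign and Φ' ⊆ SEN(Σ'), and let Ψ = {ψ ∈ SEN(Σ) : SEN(σ)(ψ) ∈ C_{Σ'}(Φ')} be the derived specification's axiom set. Then the translation of the derived specification is included in the specification derived from the translation: α_Σ(Ψ) ⊆ {χ ∈ SEN'(F(Σ)) : SEN'(F(σ))(χ) ∈ C'_{F(Σ')}(α_{Σ'}(Φ'))}. -/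
import Mathlib


open CategoryTheory

/-- If ⟨F, α⟩ interprets the π-institution I in I' (with α natural), then
for any signature morphism σ : Sg ⟶ Sg' and Φ' ⊆ SEN(Sg'), the translation of the derived
specification ⟨Sg, Ψ⟩ (Ψ = {ψ : SEN(σ)(ψ) ∈ C_{Sg'}(Φ')}) is included in the specification
derived from the translation of ⟨Sg', Φ'⟩. -/
theorem derive_translation_inclusion
    {Sign : Type u₁} [Category.{v₁} Sign] {Sign' : Type u₂} [Category.{v₂} Sign']
    (SEN : Sign ⥤ Type w₁) (SEN' : Sign' ⥤ Type w₂)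
    (C : ∀ Sg : Sign, Set (SEN.obj Sg) → Set (SEN.obj Sg))
    (hC_ext : ∀ (Sg : Sign) (A : Set (SEN.obj Sg)), A ⊆ C Sg A)
    (hC_idem : ∀ (Sg : Sign) (A : Set (SEN.obj Sg)), C Sg (C Sg A) = C Sg A)
    (hC_mono : ∀ (Sg : Sign) (A B : Set (SEN.obj Sg)), A ⊆ B → C Sg A ⊆ C Sg B)
    (hC_struct : ∀ {Sg₁ Sg₂ : Sign} (f : Sg₁ ⟶ Sg₂) (A : Set (SEN.obj Sg₁)),
      SEN.map f '' (C Sg₁ A) ⊆ C Sg₂ (SEN.map f '' A))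
    (C' : ∀ Sg' : Sign', Set (SEN'.obj Sg') → Set (SEN'.obj Sg'))
    (hC'_ext : ∀ (Sg' : Sign') (A : Set (SEN'.obj Sg')), A ⊆ C' Sg' A)
    (hC'_idem : ∀ (Sg' : Sign') (A : Set (SEN'.obj Sg')), C' Sg' (C' Sg' A) = C' Sg' A)
    (hC'_mono : ∀ (Sg' : Sign') (A B : Set (SEN'.obj Sg')), A ⊆ B → C' Sg' A ⊆ C' Sg' B)
    (hC'_struct : ∀ {Sg₁ Sg₂ : Sign'} (f : Sg₁ ⟶ Sg₂) (A : Set (SEN'.obj Sg₁)),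
      SEN'.map f '' (C' Sg₁ A) ⊆ C' Sg₂ (SEN'.map f '' A))
    (F : Sign ⥤ Sign')
    (α : ∀ Sg : Sign, SEN.obj Sg → Set (SEN'.obj (F.obj Sg)))
    -- naturality of α
    (hnat : ∀ {Sg₁ Sg₂ : Sign} (f : Sg₁ ⟶ Sg₂) (φ : SEN.obj Sg₁),
      α Sg₂ (SEN.map f φ) = SEN'.map (F.map f) '' (α Sg₁ φ))
    -- ⟨F, α⟩ interprets I in I'
    (hinterp : ∀ (Sg : Sign) (Φ : Set (SEN.obj Sg)) (φ : SEN.obj Sg),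
      φ ∈ C Sg Φ ↔ α Sg φ ⊆ C' (F.obj Sg) (⋃ ψ ∈ Φ, α Sg ψ))
    {Sg Sg' : Sign} (σ : Sg ⟶ Sg') (Φ' : Set (SEN.obj Sg')) :
    (⋃ ψ ∈ {ψ : SEN.obj Sg | SEN.map σ ψ ∈ C Sg' Φ'}, α Sg ψ) ⊆
      {χ : SEN'.obj (F.obj Sg) |
        SEN'.map (F.map σ) χ ∈ C' (F.obj Sg') (⋃ φ ∈ Φ', α Sg' φ)} := by
  intro χ hχ
  simp only [Set.mem_iUnion] at hχ
  obtain ⟨ψ, hψ, hχ⟩ := hχ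
  have h := (hinterp Sg' Φ' (SEN.map σ ψ)).mp hψ
  rw [hnat σ ψ] at h
  exact h ⟨χ, hχ, rfl⟩
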